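/- arXiv:2505.00728 — 2 statements merged into one kernel-verified Lean document; each statement's English description precedes it below -/
import Mathlib

section
/- Let P = v_1…v_k be a path and let b ∈ [0,B]. Then α_b(P) ≥ 0 if and only if g(v_1…v_j) ≥ −b for every 1 ≤ j ≤ k and g(v_{j_1}…v_{j_2}) ≥ −B for every 1 ≤ j_1 ≤ j_2 ≤ k. -/
open Finset

namespace EV

noncomputable section

/-- Charge after traversing `i` arcs of a path with arc gains `g`, battery capacity `B`,
initial charge `b`. -/
def charge (B b : ℝ) (g : ℕ → ℝ) : ℕ → ℝ
  | 0 => b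
  | i + 1 => min (charge B b g i + g i) B

/-- The traversal of the path with `n` arcs is feasible from initial charge `b`. -/
def Feasible (B b : ℝ) (g : ℕ → ℝ) (n : ℕ) : Prop :=
  ∀ i < n, 0 ≤ charge B b g i + g i

open Classical in
/-- Maximum final charge `α_b(P)` for a path `P` with `n` arc gains `g`,
as an extended real (`⊥ = -∞` if the traversal is infeasible). -/
def alpha (B b : ℝ) (g : ℕ → ℝ) (n : ℕ) : EReal :=
  if Feasible B b g n then ((charge B b g n : ℝ) : EReal) else ⊥

/-- Gain of the `i`-th vertex (0-indexed): the sum of the first `i` arc gains. -/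
def vGain (g : ℕ → ℝ) (i : ℕ) : ℝ := ∑ t ∈ Finset.range i, g t

/-- `P` is traversable: `α_B(P) ≥ 0`, i.e. feasible from a full battery. -/
def Traversable (B : ℝ) (g : ℕ → ℝ) (n : ℕ) : Prop := Feasible B B g n

/-- `C` is a charge drop schedule for a path with `n` arcs (vertices `0,…,n`):
no drop at the first vertex, all drops nonnegative. -/
def Schedule (C : ℕ → ℝ) (n : ℕ) : Prop := C 0 = 0 ∧ ∀ i ≤ n, 0 ≤ C i

/-- Gain of vertex `i` with respect to the charge drop schedule `C`. -/
def cGain (g C : ℕ → ℝ) (i : ℕ) : ℝ := vGain g i - ∑ t ∈ Finset.range (i + 1), C t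

/-- `P` (with `n` arcs) is ascending with respect to the schedule `C`. -/
def AscendingC (B : ℝ) (g C : ℕ → ℝ) (n : ℕ) : Prop :=
  Traversable B g n ∧ ∀ i ≤ n, 0 ≤ cGain g C i ∧ cGain g C i ≤ cGain g C n

/-- `P` (with `n` arcs) is descending with respect to the schedule `C`. -/
def DescendingC (B : ℝ) (g C : ℕ → ℝ) (n : ℕ) : Prop :=
  Traversable B g n ∧ ∀ i ≤ n, cGain g C n ≤ cGain g C i ∧ cGain g C i ≤ 0

/-- `P` is monotone with respect to the schedule `C`. -/
def MonotoneC (B : ℝ) (g C : ℕ → ℝ) (n : ℕ) : Prop :=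
  AscendingC B g C n ∨ DescendingC B g C n

/-- Ascending with respect to the zero schedule. -/
def Ascending (B : ℝ) (g : ℕ → ℝ) (n : ℕ) : Prop := AscendingC B g (fun _ => 0) n

/-- Descending with respect to the zero schedule. -/
def Descending (B : ℝ) (g : ℕ → ℝ) (n : ℕ) : Prop := DescendingC B g (fun _ => 0) n

/-- Monotone with respect to the zero schedule. -/
def MonotonePath (B : ℝ) (g : ℕ → ℝ) (n : ℕ) : Prop := Ascending B g n ∨ Descending B g n

/-- The contiguous subpath whose arcs start at arc index `a`. -/
def SubPath (g : ℕ → ℝ) (a : ℕ) : ℕ → ℝ := fun t => g (a + t)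

/-- Restriction of a charge drop schedule to the subpath starting at vertex `a`:
no drop at the subpath's first vertex. -/
def restrict (C : ℕ → ℝ) (a : ℕ) : ℕ → ℝ := fun t => if t = 0 then 0 else C (a + t)

/-- First-arc-bounded with respect to a schedule `C` (no drop at the second vertex,
and all vertex gains lie between the gains of the first two vertices). -/
def FirstArcBoundedC (g C : ℕ → ℝ) (n : ℕ) : Prop :=
  C 1 = 0 ∧
    ((0 ≤ g 0 ∧ ∀ i ≤ n, 0 ≤ cGain g C i ∧ cGain g C i ≤ g 0) ∨
     (g 0 ≤ 0 ∧ ∀ i ≤ n, g 0 ≤ cGain g C i ∧ cGain g C i ≤ 0))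

/-- Last-arc-bounded with respect to a schedule `C` (no drops at the last two vertices,
and all vertex gains lie between the gains of the last two vertices). -/
def LastArcBoundedC (g C : ℕ → ℝ) (n : ℕ) : Prop :=
  C (n - 1) = 0 ∧ C n = 0 ∧
    ((0 ≤ g (n - 1) ∧ ∀ i ≤ n, cGain g C (n - 1) ≤ cGain g C i ∧ cGain g C i ≤ cGain g C n) ∨
     (g (n - 1) < 0 ∧ ∀ i ≤ n, cGain g C n ≤ cGain g C i ∧ cGain g C i ≤ cGain g C (n - 1)))

/-- First-arc-bounded (zero schedule). -/
def FirstArcBounded (g : ℕ → ℝ) (n : ℕ) : Prop := FirstArcBoundedC g (fun _ => 0) n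

/-- Last-arc-bounded (zero schedule). -/
def LastArcBounded (g : ℕ → ℝ) (n : ℕ) : Prop := LastArcBoundedC g (fun _ => 0) n

/-- Arc-bounded: first- or last-arc-bounded. -/
def ArcBounded (g : ℕ → ℝ) (n : ℕ) : Prop := FirstArcBounded g n ∨ LastArcBounded g n

/-- A funnel: arc-bounded and containing no monotone subpath of 2 or 3 consecutive arcs. -/
def Funnel (B : ℝ) (g : ℕ → ℝ) (n : ℕ) : Prop :=
  ArcBounded g n ∧ ∀ a m, (m = 2 ∨ m = 3) → a + m ≤ n → ¬ MonotonePath B (SubPath g a) m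

/-- `j = s̄(i)`: the maximal index `j ≥ i` (among arcs of a path with `n` arcs) such that
the subpath of arcs `i,…,j` is first-arc-bounded. -/
def IsSbar (g : ℕ → ℝ) (n i j : ℕ) : Prop :=
  i ≤ j ∧ j < n ∧ FirstArcBounded (SubPath g i) (j - i + 1) ∧
    ∀ j', i ≤ j' → j' < n → FirstArcBounded (SubPath g i) (j' - i + 1) → j' ≤ j

/-- `j = s̲(i)`: the minimal index `j ≤ i` such that the subpath of arcs `j,…,i`
is last-arc-bounded. -/
def IsSlow (g : ℕ → ℝ) (n i j : ℕ) : Prop :=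
  j ≤ i ∧ i < n ∧ LastArcBounded (SubPath g j) (i - j + 1) ∧
    ∀ j', j' ≤ i → LastArcBounded (SubPath g j') (i - j' + 1) → j ≤ j'

/-- Arc gains of the walk around a cycle with `m` arc gains `g`, starting at vertex `a`. -/
def cyc (g : ℕ → ℝ) (m a : ℕ) : ℕ → ℝ := fun t => g ((a + t) % m)

/-- A walk of length `ℓ` from `x` to `y` in the directed graph with arc relation `A`. -/
def IsWalk {V : Type*} (A : V → V → Prop) (w : ℕ → V) (ℓ : ℕ) (x y : V) : Prop :=
  w 0 = x ∧ w ℓ = y ∧ ∀ t < ℓ, A (w t) (w (t + 1))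

/-- The sequence of arc gains induced by a walk `w` in a graph with gain function `g`. -/
def walkGains {V : Type*} (g : V → V → ℝ) (w : ℕ → V) : ℕ → ℝ :=
  fun t => g (w t) (w (t + 1))

lemma vGain_zero (g : ℕ → ℝ) : vGain g 0 = 0 := by
  simp [vGain]

lemma vGain_succ (g : ℕ → ℝ) (i : ℕ) : vGain g (i + 1) = vGain g i + g i := by
  simp [vGain, Finset.sum_range_succ]

section Charge

variable {B b : ℝ} {g : ℕ → ℝ}

lemma charge_succ_le (i : ℕ) : charge B b g (i + 1) ≤ charge B b g i + g i :=
  min_le_left _ _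

lemma charge_le_capacity (hbB : b ≤ B) (i : ℕ) : charge B b g i ≤ B := by
  cases i with
  | zero => exact hbB
  | succ i => exact min_le_right _ _

lemma charge_le_charge_add_vGain_sub {j i : ℕ} (hji : j ≤ i) :
    charge B b g i ≤ charge B b g j + (vGain g i - vGain g j) := by
  induction i, hji using Nat.le_induction with
  | base => simp
  | succ i _ ih => linarith [charge_succ_le (B := B) (b := b) (g := g) i, vGain_succ g i]

lemma charge_le_add_vGain (i : ℕ) : charge B b g i ≤ b + vGain g i := by
  simpa [charge, vGain_zero] using
    charge_le_charge_add_vGain_sub (B := B) (b := b) (g := g) i.zero_le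

/-- The charge after `i` arcs is in fact
`min (b + vGain g i) (min_{j ≤ i} (B + vGain g i - vGain g j))`,
`j` being the last vertex at which the battery was full. -/
lemma le_charge {c : ℝ} {i : ℕ} (hb : c ≤ b + vGain g i)
    (hB : ∀ j ≤ i, c ≤ B + (vGain g i - vGain g j)) : c ≤ charge B b g i := by
  induction i generalizing c with
  | zero => simpa [charge, vGain_zero] using hb
  | succ i ih =>
    have hprev : c - g i ≤ charge B b g i :=
      ih (by linarith [vGain_succ g i])
        (fun j hj => by linarith [vGain_succ g i, hB j (hj.trans i.le_succ)])
    have hcap : c ≤ B := by simpa using hB (i + 1) le_rfl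
    exact le_min (by linarith) hcap

end Charge

lemma zero_le_alpha_iff {B b : ℝ} (hb0 : 0 ≤ b) (hB0 : 0 ≤ B) (g : ℕ → ℝ) (n : ℕ) :
    (0 : EReal) ≤ alpha B b g n ↔ ∀ i ≤ n, 0 ≤ charge B b g i := by
  have feasible_iff : Feasible B b g n ↔ ∀ i < n, 0 ≤ charge B b g (i + 1) :=
    forall₂_congr fun i _ => ⟨fun h => le_min h hB0, fun h => h.trans (min_le_left _ _)⟩
  unfold alpha
  split_ifs with hfeas
  · rw [EReal.coe_nonneg]
    refine ⟨fun hn i hi => ?_, fun h => h n le_rfl⟩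
    rcases i with _ | i
    · exact hb0
    · exact feasible_iff.mp hfeas i hi
  · exact iff_of_false (by simp) fun h => hfeas (feasible_iff.mpr fun i hi => h (i + 1) hi)

theorem alpha_nonneg_iff_general (B : ℝ) (b : ℝ) (hb0 : 0 ≤ b) (hbB : b ≤ B)
    (g : ℕ → ℝ) (n : ℕ) :
    (0 : EReal) ≤ alpha B b g n ↔
      ((∀ j ≤ n, -b ≤ vGain g j) ∧
        ∀ j₁ j₂, j₁ ≤ j₂ → j₂ ≤ n → -B ≤ vGain g j₂ - vGain g j₁) := by
  rw [zero_le_alpha_iff hb0 (hb0.trans hbB)]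
  constructor
  · intro hcharge
    refine ⟨fun j hj => ?_, fun j₁ j₂ h₁₂ h₂ => ?_⟩
    · linarith [hcharge j hj, charge_le_add_vGain (B := B) (b := b) (g := g) j]
    · linarith [hcharge j₂ h₂, charge_le_capacity (g := g) hbB j₁,
        charge_le_charge_add_vGain_sub (B := B) (b := b) (g := g) h₁₂]
  · rintro ⟨hprefix, hsub⟩ i hi
    exact le_charge (by linarith [hprefix i hi]) fun j hj => by linarith [hsub j i hj hi]

/-- `α_b(P) ≥ 0` iff every prefix gain is at least `-b` and every
contiguous subpath has gain at least `-B`. -/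
theorem alpha_nonneg_iff (B : ℝ) (hB : 0 < B) (b : ℝ) (hb0 : 0 ≤ b) (hbB : b ≤ B)
    (g : ℕ → ℝ) (n : ℕ) :
    (0 : EReal) ≤ alpha B b g n ↔
      ((∀ j ≤ n, -b ≤ vGain g j) ∧
        ∀ j₁ j₂, j₁ ≤ j₂ → j₂ ≤ n → -B ≤ vGain g j₂ - vGain g j₁) :=
  alpha_nonneg_iff_general B b hb0 hbB g n

end

end EV
end

section
/- Let P be a path that is descending with respect to a charge drop schedule C and let b ∈ [0,B]. If g^C(P) ≥ −b, then α_b(P) ≥ b + g^C(P). -/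
open Finset

namespace EV

noncomputable section

/-! Along the path the charge stays above `b + g^C(v_i)`: each arc changes the bound by its
gain minus a nonnegative drop, and truncation at `B` is harmless while the bound is at most `B`.
Feasibility then follows because the charge before arc `i` plus its gain is at least
`b + g^C(v_{i+1}) ≥ 0`. For a descending path both side conditions hold, since
`g^C(P) ≤ g^C(v_i) ≤ 0`. -/

section

variable {B b : ℝ} {g C : ℕ → ℝ} {n : ℕ}

theorem cGain_zero (hC0 : C 0 = 0) : cGain g C 0 = 0 := by
  simp [cGain, vGain, hC0]

theorem cGain_succ (i : ℕ) : cGain g C (i + 1) = cGain g C i + g i - C (i + 1) := by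
  simp only [cGain, vGain, Finset.sum_range_succ]
  ring

theorem add_cGain_le_charge (hC : Schedule C n) (hcap : ∀ i ≤ n, b + cGain g C i ≤ B) :
    ∀ i ≤ n, b + cGain g C i ≤ charge B b g i
  | 0, _ => by simp [charge, cGain_zero hC.1]
  | i + 1, hi => by
    have ih := add_cGain_le_charge hC hcap i (by omega)
    have hdrop := hC.2 (i + 1) hi
    refine le_min ?_ (hcap (i + 1) hi)
    rw [cGain_succ]
    linarith

theorem feasible_of_add_cGain_nonneg (hC : Schedule C n)
    (hcap : ∀ i ≤ n, b + cGain g C i ≤ B) (hnonneg : ∀ i ≤ n, 0 ≤ b + cGain g C i) :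
    Feasible B b g n := by
  intro i hi
  have hcharge := add_cGain_le_charge hC hcap i hi.le
  have hdrop := hC.2 (i + 1) hi
  have hnext := hnonneg (i + 1) hi
  rw [cGain_succ] at hnext
  linarith

theorem add_cGain_le_alpha (hC : Schedule C n)
    (hcap : ∀ i ≤ n, b + cGain g C i ≤ B) (hnonneg : ∀ i ≤ n, 0 ≤ b + cGain g C i) :
    ((b + cGain g C n : ℝ) : EReal) ≤ alpha B b g n := by
  rw [alpha, if_pos (feasible_of_add_cGain_nonneg hC hcap hnonneg)]
  exact_mod_cast add_cGain_le_charge hC hcap n le_rfl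

end

theorem alpha_of_descending_general (B : ℝ) (g C : ℕ → ℝ) (n : ℕ)
    (hC : Schedule C n) (hP : DescendingC B g C n)
    (b : ℝ) (hbB : b ≤ B) (hg : -b ≤ cGain g C n) :
    ((b + cGain g C n : ℝ) : EReal) ≤ alpha B b g n :=
  add_cGain_le_alpha hC (fun i hi => by linarith [(hP.2 i hi).2])
    (fun i hi => by linarith [(hP.2 i hi).1])

/-- If `P` is descending with respect to a schedule `C`, `b ∈ [0,B]` and
`g^C(P) ≥ -b`, then `α_b(P) ≥ b + g^C(P)`. -/
theorem alpha_of_descending (B : ℝ) (hB : 0 < B) (g C : ℕ → ℝ) (n : ℕ)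
    (hC : Schedule C n) (hP : DescendingC B g C n)
    (b : ℝ) (hb0 : 0 ≤ b) (hbB : b ≤ B) (hg : -b ≤ cGain g C n) :
    ((b + cGain g C n : ℝ) : EReal) ≤ alpha B b g n :=
  alpha_of_descending_general B g C n hC hP b hbB hg

end

end EV
end
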